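/- Let p, a, b ≥ 0 satisfy p ≤ b + a√p + a^{3/2} p^{1/4} + 2a². Then p ≤ C(b + a√b + a^{3/2} b^{1/4} + a²) for some absolute constant C. -/
import Mathlib


/-- if nonnegative reals satisfy `p ≤ b + a√p + a^{3/2} p^{1/4} + 2a²`, then
`p ≤ C (b + a√b + a^{3/2} b^{1/4} + a²)` for some absolute constant `C`. -/
theorem implicit_risk_bound_solve :
    ∃ C : ℝ, 0 < C ∧ ∀ p a b : ℝ, 0 ≤ p → 0 ≤ a → 0 ≤ b →
      p ≤ b + a * Real.sqrt p + a ^ ((3 : ℝ) / 2) * p ^ ((1 : ℝ) / 4) + 2 * a ^ 2 →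
      p ≤ C * (b + a * Real.sqrt b + a ^ ((3 : ℝ) / 2) * b ^ ((1 : ℝ) / 4) + a ^ 2) := by
  refine ⟨8, by norm_num, fun p a b hp ha hb h => ?_⟩
  -- a√p ≤ p/4 + a²
  have h1 : a * Real.sqrt p ≤ p / 4 + a ^ 2 := by
    nlinarith [sq_nonneg (Real.sqrt p / 2 - a), Real.sq_sqrt hp, Real.sqrt_nonneg p]
  -- a^{3/2} p^{1/4} ≤ (3/4) a² + (1/4) p
  have h2 : a ^ ((3 : ℝ) / 2) * p ^ ((1 : ℝ) / 4) ≤ 3 / 4 * a ^ 2 + 1 / 4 * p := by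
    have := Real.geom_mean_le_arith_mean2_weighted (by norm_num : (0:ℝ) ≤ 3/4)
      (by norm_num : (0:ℝ) ≤ 1/4) (sq_nonneg a) hp (by norm_num)
    have ha2 : (a ^ 2) ^ ((3 : ℝ) / 4) = a ^ ((3 : ℝ) / 2) := by
      rw [← Real.rpow_natCast a 2, ← Real.rpow_mul ha]
      norm_num
    rw [ha2] at this
    exact this
  -- nonneg terms
  have h3 : 0 ≤ a * Real.sqrt b := mul_nonneg ha (Real.sqrt_nonneg b)
  have h4 : 0 ≤ a ^ ((3 : ℝ) / 2) * b ^ ((1 : ℝ) / 4) :=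
    mul_nonneg (Real.rpow_nonneg ha _) (Real.rpow_nonneg hb _)
  nlinarith
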